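/- Let q be a real number with q > 0 and q ≠ 1, and let λ ∈ ℝ. Define ev : ℂ[z] → ℂ[x,y] by ev(z^n) = Σ_{k=0}^n [n choose k]_q q^{(k+λ)(n−k)} x^k y^{n−k} (the ordered expansion of (x + q^λ y)^n in the quantum plane yx = q²xy). Then the adjoint of ev with respect to the q-Fischer inner products is given by ev†(f ⊗ g)(z) = f(z) g(q^λ z); that is, for all P ∈ ℂ[z], f ∈ ℂ[x], g ∈ ℂ[y]: ⟨ev(P), f(x)g(y)⟩_{ℂ[x,y]} = ⟨P, f(z)g(q^λ z)⟩_{ℂ[z]}. -/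

import Mathlib

noncomputable section

open Finset

/-- The q-number [x] = (q^x − q^{−x})/(q − q⁻¹) for real q > 0 and x ∈ ℝ. -/
def qnumR (q x : ℝ) : ℝ := (q ^ x - q ^ (-x)) / (q - q⁻¹)

/-- [x]_n = ∏_{s=0}^{n−1}[x+s]. -/
def qpochR (q x : ℝ) (n : ℕ) : ℝ := ∏ s ∈ Finset.range n, qnumR q (x + s)

/-- [n]! = [1]_n. -/
def qfactR (q : ℝ) (n : ℕ) : ℝ := ∏ s ∈ Finset.range n, qnumR q ((s : ℝ) + 1)

/-- [n choose k] = [n]!/([k]![n−k]!). -/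
def qbinomR (q : ℝ) (n k : ℕ) : ℝ := qfactR q n / (qfactR q k * qfactR q (n - k))

/-- ℂ[z] with basis the monomials z^m (with its convolution product). -/
abbrev P1 : Type := AddMonoidAlgebra ℂ ℕ

/-- ℂ[x] ⊗ ℂ[y] with basis the monomials x^k y^l. -/
abbrev P2 : Type := (ℕ × ℕ) →₀ ℂ

def mono (k l : ℕ) : P2 := Finsupp.single (k, l) 1

/-- q-Fischer inner product on ℂ[z]: ⟨z^n, z^m⟩ = δ_{n,m} q^{n(n−1)/2}[n]!. -/
def ip1 (q : ℝ) (P Q : P1) : ℂ :=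
  Finsupp.sum P.coeff fun m c =>
    c * (starRingEnd ℂ) (Q.coeff m) * ((q : ℂ) ^ (m * (m - 1) / 2) * (qfactR q m : ℂ))

/-- q-Fischer inner product on ℂ[x]⊗ℂ[y]:
⟨x^a y^b, x^c y^d⟩ = δ_{a,c} δ_{b,d} q^{a(a−1)/2+b(b−1)/2}[a]![b]!. -/
def ip2 (q : ℝ) (P Q : P2) : ℂ :=
  Finsupp.sum P fun ab c =>
    c * (starRingEnd ℂ) (Q ab) *
      ((q : ℂ) ^ (ab.1 * (ab.1 - 1) / 2 + ab.2 * (ab.2 - 1) / 2)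
        * (qfactR q ab.1 : ℂ) * (qfactR q ab.2 : ℂ))

/-- The element f(x)g(y) of ℂ[x]⊗ℂ[y]. -/
def fg (f g : P1) : P2 :=
  Finsupp.sum f.coeff fun a ca => Finsupp.sum g.coeff fun b cb => Finsupp.single (a, b) (ca * cb)

/-- The q-derivative D_{q²}, with D_{q²} z^m = q^{m−1}[m] z^{m−1}. -/
def Dq (q : ℝ) : P1 →ₗ[ℂ] P1 :=
  (Finsupp.lsum ℂ fun (m : ℕ) => LinearMap.toSpanSingleton ℂ P1
    (((q ^ (m - 1) * qnumR q m : ℝ) : ℂ) • (AddMonoidAlgebra.ofCoeff (Finsupp.single (m - 1) 1) : P1)))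
      ∘ₗ (AddMonoidAlgebra.coeffLinearEquiv ℂ).toLinearMap

/-- The scaling operator h(z) ↦ h(c·z). -/
def scP (c : ℂ) : P1 →ₗ[ℂ] P1 :=
  (Finsupp.lsum ℂ fun m => LinearMap.toSpanSingleton ℂ P1
    ((c ^ m) • (AddMonoidAlgebra.ofCoeff (Finsupp.single m 1) : P1)))
      ∘ₗ (AddMonoidAlgebra.coeffLinearEquiv ℂ).toLinearMap

/-- The map ev : ℂ[z] → ℂ[x,y], z^n ↦ Σ_{k=0}^n [n choose k] q^{(k+λ)(n−k)} x^k y^{n−k}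
(the ordered expansion of (x+q^λ y)^n in the quantum plane). -/
def ev (q lam : ℝ) : P1 →ₗ[ℂ] P2 :=
  (Finsupp.lsum ℂ fun n => LinearMap.toSpanSingleton ℂ P2
    (∑ k ∈ Finset.range (n + 1),
      (((qbinomR q n k * q ^ (((k : ℝ) + lam) * ((n : ℝ) - (k : ℝ))) : ℝ)) : ℂ)
        • mono k (n - k)))
      ∘ₗ (AddMonoidAlgebra.coeffLinearEquiv ℂ).toLinearMap

/-! Both sides are linear in `P`, so it suffices to take `P = z^n`. Pairing against `f(x) g(y)`
then only sees the coefficients of `x^k y^(n-k)`, and the statement becomes the termwise identity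
`[n choose k] q^((k+λ)(n-k)) w(k) w(n-k) = (q^λ)^(n-k) w(n)` for the Fischer weights
`w(m) = q^(m(m-1)/2) [m]!`. It holds because `[n choose k] [k]! [n-k]! = [n]!` and
`k(n-k) + k(k-1)/2 + (n-k)(n-k-1)/2 = n(n-1)/2`; the leftover `q^(λ(n-k))` is exactly the
rescaling `g(z) ↦ g(q^λ z)`. -/

open ComplexConjugate

lemma qfactR_eq_zero_of_le {q : ℝ} {m n : ℕ} (hmn : m ≤ n) (h : qfactR q m = 0) :
    qfactR q n = 0 := by
  obtain ⟨s, hs, hs0⟩ := Finset.prod_eq_zero_iff.mp h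
  exact Finset.prod_eq_zero_iff.mpr ⟨s, Finset.range_subset_range.mpr hmn hs, hs0⟩

-- `[k]!` and `[n-k]!` are partial products of `[n]!`, so the junk value of the division at a
-- vanishing denominator does no harm.
lemma qbinomR_mul_qfactR_mul_qfactR (q : ℝ) {n k : ℕ} (hk : k ≤ n) :
    qbinomR q n k * (qfactR q k * qfactR q (n - k)) = qfactR q n :=
  div_mul_cancel_of_imp fun h => (mul_eq_zero.mp h).elim
    (qfactR_eq_zero_of_le hk) (qfactR_eq_zero_of_le (Nat.sub_le n k))

lemma Nat.add_mul_pred_div_two (a b : ℕ) :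
    (a + b) * (a + b - 1) / 2 = a * b + (a * (a - 1) / 2 + b * (b - 1) / 2) := by
  simp only [← Nat.choose_two_right]
  apply Nat.cast_injective (R := ℚ)
  push_cast [Nat.cast_choose_two]
  ring

def fischerWeight (q : ℝ) (m : ℕ) : ℝ := q ^ (m * (m - 1) / 2) * qfactR q m

lemma qbinomR_mul_rpow_mul_fischerWeight {q : ℝ} (hq : 0 < q) (lam : ℝ) {n k : ℕ} (hk : k ≤ n) :
    qbinomR q n k * q ^ (((k : ℝ) + lam) * ((n : ℝ) - (k : ℝ)))
        * (fischerWeight q k * fischerWeight q (n - k))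
      = (q ^ lam) ^ (n - k) * fischerWeight q n := by
  obtain ⟨b, rfl⟩ := Nat.exists_eq_add_of_le hk
  have hexp : ((k : ℝ) + lam) * (((k + b : ℕ) : ℝ) - (k : ℝ)) = ((k * b : ℕ) : ℝ) + lam * b := by
    push_cast; ring
  have hfact := qbinomR_mul_qfactR_mul_qfactR q hk
  rw [Nat.add_sub_cancel_left] at hfact ⊢
  rw [hexp, Real.rpow_add hq, Real.rpow_natCast, Real.rpow_mul hq.le, Real.rpow_natCast]
  simp only [fischerWeight, Nat.add_mul_pred_div_two, pow_add, ← hfact]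
  ring

lemma fg_apply (f g : P1) (a b : ℕ) : fg f g (a, b) = f.coeff a * g.coeff b := by
  classical
  simp only [fg, Finsupp.sum_apply, Finsupp.single_apply, Prod.mk.injEq, ← ite_zero_mul_ite_zero,
    ← Finsupp.mul_sum, ← Finsupp.sum_mul, Finsupp.sum_ite_self_eq']

lemma scP_coeff (c : ℂ) (g : P1) (m : ℕ) : (scP c g).coeff m = c ^ m * g.coeff m := by
  simp +contextual [scP, Finsupp.sum_apply, Finsupp.single_apply, mul_comm]

lemma coeff_mul_eq_sum_range (f h : P1) (n : ℕ) :
    (f * h).coeff n = ∑ k ∈ range (n + 1), f.coeff k * h.coeff (n - k) := by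
  rw [AddMonoidAlgebra.coeff_mul_antidiag f h n (antidiagonal n) mem_antidiagonal,
    Nat.sum_antidiagonal_eq_sum_range_succ_mk]

def evMonomial (q lam : ℝ) (n : ℕ) : P2 :=
  ∑ k ∈ Finset.range (n + 1),
    (((qbinomR q n k * q ^ (((k : ℝ) + lam) * ((n : ℝ) - (k : ℝ))) : ℝ)) : ℂ) • mono k (n - k)

lemma ev_apply (q lam : ℝ) (P : P1) :
    ev q lam P = P.coeff.sum fun n c => c • evMonomial q lam n :=
  rfl

lemma ip2_eq_linearCombination (q : ℝ) (P Q : P2) :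
    ip2 q P Q = Finsupp.linearCombination ℂ
      (fun ab : ℕ × ℕ => conj (Q ab) * (fischerWeight q ab.1 * fischerWeight q ab.2 : ℝ)) P := by
  rw [ip2, Finsupp.linearCombination_apply]
  refine Finsupp.sum_congr fun ab _ => ?_
  simp only [fischerWeight, pow_add, smul_eq_mul]
  push_cast
  ring

lemma ip2_ev_left (q lam : ℝ) (P : P1) (Q : P2) :
    ip2 q (ev q lam P) Q = P.coeff.sum fun n c => c * ip2 q (evMonomial q lam n) Q := by
  simp only [ip2_eq_linearCombination, ev_apply, map_finsuppSum, map_smul, smul_eq_mul]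

lemma ip2_evMonomial_fg {q : ℝ} (hq : 0 < q) (lam : ℝ) (n : ℕ) (f g : P1) :
    ip2 q (evMonomial q lam n) (fg f g)
      = conj ((f * scP ((q ^ lam : ℝ) : ℂ) g).coeff n) * (fischerWeight q n : ℂ) := by
  rw [ip2_eq_linearCombination, evMonomial, coeff_mul_eq_sum_range, map_sum, map_sum,
    Finset.sum_mul]
  refine Finset.sum_congr rfl fun k hk => ?_
  have key := congrArg Complex.ofReal
    (qbinomR_mul_rpow_mul_fischerWeight hq lam (Nat.lt_succ_iff.mp (mem_range.mp hk)))
  rw [map_smul, mono, Finsupp.linearCombination_single, fg_apply, scP_coeff]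
  simp only [map_mul, map_pow, Complex.conj_ofReal, smul_eq_mul]
  push_cast at key ⊢
  linear_combination (conj (f.coeff k) * conj (g.coeff (n - k))) * key

theorem ev_adjoint_general (q : ℝ) (hq : 0 < q) (lam : ℝ)
    (P f g : P1) :
    ip2 q (ev q lam P) (fg f g)
      = ip1 q P (f * scP (((q ^ lam : ℝ)) : ℂ) g) := by
  rw [ip2_ev_left, ip1]
  refine Finsupp.sum_congr fun n _ => ?_
  rw [ip2_evMonomial_fg hq, fischerWeight]
  push_cast
  ring

/-- **Adjoint of the evaluation map** (formula (5.5)):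
ev†(f ⊗ g)(z) = f(z)g(q^λ z), i.e. for all P, f, g:
⟨ev(P), f(x)g(y)⟩ = ⟨P, f(z)·g(q^λ z)⟩. -/
theorem ev_adjoint (q : ℝ) (hq : 0 < q) (hq1 : q ≠ 1) (lam : ℝ)
    (P f g : P1) :
    ip2 q (ev q lam P) (fg f g)
      = ip1 q P (f * scP (((q ^ lam : ℝ)) : ℂ) g) :=
  ev_adjoint_general q hq lam P f g
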